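/- Let A be a real symmetric m×m positive definite matrix and v ∈ ℝ^m, and define x : ℝ → ℝ^m by x(t) = (tA + (1−t)I)^{1/2} v. Then for every t ∈ (0,1), x is differentiable at t with derivative x′(t) = −(1/2)(tA + (1−t)I)⁻¹ (I − A) x(t); together with x(0) = v, x solves the initial value problem of equation (3). -/

import Mathlib

open Matrix

namespace Matrix.PosSemidef

open scoped ComplexOrder

/-- The positive semidefinite square root of a positive semidefinite matrix
(the definition `Matrix.PosSemidef.sqrt` of the older Mathlib, since removed). -/
noncomputable def sqrt {n 𝕜 : Type*} [Fintype n] [RCLike 𝕜] [DecidableEq n]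
    {A : Matrix n n 𝕜} (hA : A.PosSemidef) : Matrix n n 𝕜 :=
  (hA.1.eigenvectorUnitary : Matrix n n 𝕜) * diagonal ((↑) ∘ (√·) ∘ hA.1.eigenvalues) *
    (star hA.1.eigenvectorUnitary : Matrix n n 𝕜)

end Matrix.PosSemidef

/-!
Diagonalising `A`, the matrices `t • A + (1 - t) • 1` and their square roots are the functions
`s ↦ t * s + (1 - t)` and `s ↦ √(t * s + (1 - t))` of `A` in the continuous functional calculus.
Each eigencomponent of `x` is therefore a scalar function solving the scalar version of the ODE,
and because the functional calculus is multiplicative the scalar ODEs assemble to the matrix one.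
-/

namespace Matrix

variable {n 𝕜 : Type*} [Fintype n] [DecidableEq n] [RCLike 𝕜] {A : Matrix n n 𝕜}

section

open scoped ComplexOrder

lemma PosSemidef.sqrt_eq_cfc (hA : A.PosSemidef) : hA.sqrt = cfc Real.sqrt A := by
  rw [hA.1.cfc_eq, IsHermitian.cfc, Unitary.conjStarAlgAut_apply]
  rfl

lemma PosDef.pos_of_mem_spectrum_real (hA : A.PosDef) {s : ℝ} (hs : s ∈ spectrum ℝ A) :
    0 < s := by
  obtain ⟨i, rfl⟩ := hA.isHermitian.spectrum_real_eq_range_eigenvalues ▸ hs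
  exact hA.eigenvalues_pos i

end

namespace IsHermitian

lemma cfc_affine (hA : A.IsHermitian) (a b : ℝ) : cfc (fun s => a * s + b) A = a • A + b • 1 := by
  rw [cfc_add .., cfc_const_mul .., cfc_id' .., cfc_const .., Algebra.algebraMap_eq_smul_one]

lemma cfc_mulVec (hA : A.IsHermitian) (f : ℝ → ℝ) (v : n → 𝕜) :
    cfc f A *ᵥ v = (hA.eigenvectorUnitary : Matrix n n 𝕜) *ᵥ
      fun k => f (hA.eigenvalues k) • (star (hA.eigenvectorUnitary : Matrix n n 𝕜) *ᵥ v) k := by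
  rw [hA.cfc_eq, IsHermitian.cfc, Unitary.conjStarAlgAut_apply, ← mulVec_mulVec, ← mulVec_mulVec]
  congr 1
  ext k
  simp [mulVec_diagonal, RCLike.real_smul_eq_coe_mul]

theorem hasDerivAt_cfc_mulVec (hA : A.IsHermitian) {f f' : ℝ → ℝ → ℝ} {t : ℝ}
    (hf : ∀ s ∈ spectrum ℝ A, HasDerivAt (f · s) (f' t s) t) (v : n → 𝕜) :
    HasDerivAt (fun τ => cfc (f τ) A *ᵥ v) (cfc (f' t) A *ᵥ v) t := by
  simp only [hA.cfc_mulVec]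
  have hcoord := hasDerivAt_pi.2 fun k =>
    (hf _ (hA.eigenvalues_mem_spectrum_real k)).smul_const
      ((star (hA.eigenvectorUnitary : Matrix n n 𝕜) *ᵥ v) k)
  exact ((mulVecLin (hA.eigenvectorUnitary : Matrix n n 𝕜)).toContinuousLinearMap.restrictScalars
    ℝ).hasFDerivAt.comp_hasDerivAt t hcoord

end IsHermitian

end Matrix

lemma hasDerivAt_sqrt_affine_path {s t : ℝ} (h : 0 < t * s + (1 - t)) :
    HasDerivAt (fun τ => √(τ * s + (1 - τ)))
      (-(1 / 2) * ((t * s + (1 - t))⁻¹ * ((1 - s) * √(t * s + (1 - t))))) t := by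
  have hderiv := (((hasDerivAt_id t).mul_const s).add ((hasDerivAt_id t).const_sub 1)).sqrt h.ne'
  refine hderiv.congr_deriv ?_
  have hr := Real.sqrt_pos.2 h
  have hsq := Real.sq_sqrt h.le
  simp only [id, Pi.add_apply]
  set r := √(t * s + (1 - t))
  -- with `t * s + (1 - t) = r ^ 2` the identity is rational in `r`
  rw [← hsq]
  field_simp
  ring

theorem sqrt_path_solves_ode_general (m : ℕ) (A : Matrix (Fin m) (Fin m) ℝ)
    (hpos : A.PosDef) (v : Fin m → ℝ)
    (h : ∀ t ∈ Set.Icc (0 : ℝ) 1,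
      (t • A + (1 - t) • (1 : Matrix (Fin m) (Fin m) ℝ)).PosSemidef)
    (x : ℝ → Fin m → ℝ)
    (hx : ∀ t, ∀ ht : t ∈ Set.Icc (0 : ℝ) 1, x t = (h t ht).sqrt *ᵥ v) :
    (∀ t ∈ Set.Ioo (0 : ℝ) 1,
      HasDerivAt x
        ((-(1 / 2 : ℝ)) • ((t • A + (1 - t) • (1 : Matrix (Fin m) (Fin m) ℝ))⁻¹ *ᵥ
          ((1 - A) *ᵥ x t))) t) ∧
    x 0 = v := by
  have hA := hpos.isHermitian
  have hcont (f : ℝ → ℝ) : ContinuousOn f (spectrum ℝ A) := A.finite_real_spectrum.continuousOn f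
  have hx_cfc : ∀ t ∈ Set.Icc (0 : ℝ) 1, x t = cfc (fun s => √(t * s + (1 - t))) A *ᵥ v := by
    intro t ht
    rw [hx t ht, (h t ht).sqrt_eq_cfc, ← hA.cfc_affine, ← cfc_comp' _ _ _]
  refine ⟨fun t ht => ?_, by simp [hx_cfc 0 (by simp), cfc_const_one ℝ A]⟩
  have hpath_pos : ∀ s ∈ spectrum ℝ A, 0 < t * s + (1 - t) := fun s hs => by
    nlinarith [hpos.pos_of_mem_spectrum_real hs, ht.1, ht.2]
  have hderiv := hA.hasDerivAt_cfc_mulVec (f := fun τ s => √(τ * s + (1 - τ)))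
    (f' := fun t s => -(1 / 2) * ((t * s + (1 - t))⁻¹ * ((1 - s) * √(t * s + (1 - t)))))
    (fun s hs => hasDerivAt_sqrt_affine_path (hpath_pos s hs)) v
  have h1A : cfc (fun s : ℝ => 1 - s) A = 1 - A := by
    rw [cfc_sub .., cfc_const_one ℝ A, cfc_id' ℝ A]
  rw [cfc_const_mul _ _ _ (hcont _), cfc_mul _ _ _ (hcont _) (hcont _),
    cfc_mul _ _ _ (hcont _) (hcont _), cfc_inv _ _ (fun s hs => (hpath_pos s hs).ne') (hcont _),
    hA.cfc_affine, h1A, ← nonsing_inv_eq_ringInverse, smul_mulVec, ← mulVec_mulVec,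
    ← mulVec_mulVec, ← hx_cfc t (Set.Ioo_subset_Icc_self ht)] at hderiv
  exact hderiv.congr_of_eventuallyEq (Filter.eventuallyEq_of_mem (Ioo_mem_nhds ht.1 ht.2)
    fun s hs => hx_cfc s (Set.Ioo_subset_Icc_self hs))

/-- Let `A` be a real symmetric `m × m` positive definite matrix and
`v ∈ ℝ^m`, and let `x : ℝ → ℝ^m` satisfy `x t = (t • A + (1 - t) • I)^{1/2} v` for
`t ∈ [0,1]`. Then for every `t ∈ (0,1)`, `x` is differentiable at `t` with derivative
`x'(t) = -(1/2) (t • A + (1 - t) • I)⁻¹ (I - A) x(t)`; together with `x 0 = v`, `x`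
solves the initial value problem of equation (3). -/
theorem sqrt_path_solves_ode (m : ℕ) (A : Matrix (Fin m) (Fin m) ℝ)
    (hA : A.IsSymm) (hpos : A.PosDef) (v : Fin m → ℝ)
    (h : ∀ t ∈ Set.Icc (0 : ℝ) 1,
      (t • A + (1 - t) • (1 : Matrix (Fin m) (Fin m) ℝ)).PosSemidef)
    (x : ℝ → Fin m → ℝ)
    (hx : ∀ t, ∀ ht : t ∈ Set.Icc (0 : ℝ) 1, x t = (h t ht).sqrt *ᵥ v) :
    (∀ t ∈ Set.Ioo (0 : ℝ) 1,
      HasDerivAt x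
        ((-(1 / 2 : ℝ)) • ((t • A + (1 - t) • (1 : Matrix (Fin m) (Fin m) ℝ))⁻¹ *ᵥ
          ((1 - A) *ᵥ x t))) t) ∧
    x 0 = v :=
  sqrt_path_solves_ode_general m A hpos v h x hx
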